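/- arXiv:1911.00618 — 3 statements merged into one kernel-verified Lean document; each statement's English description precedes it below -/
import Mathlib

section
/- Let φ be a continuous flow on a compact metric space M, let x ∈ M, and let σ be a fixed point of φ contained in ω(x) with ω(x) ≠ {σ}. Suppose there is ε > 0 such that every point z whose entire forward orbit stays in the open ball B_ε(σ) satisfies φ_t(z) → σ as t → ∞. Then there exists a point y ≠ σ with y ∈ ω(x) such that φ_t(y) ∈ closure(B_ε(σ)) for all t ≥ 0 and φ_t(y) → σ as t → ∞. -/
/-!
Pick `w ∈ ω(x)` other than `σ` and `0 < δ < min ε (dist w σ)`. The orbit of `x` leaves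
`closedBall σ δ` at arbitrarily late times (it accumulates on `w`) and afterwards comes arbitrarily
close to `σ`. Cutting such an excursion at its last crossing of `sphere σ δ` gives a point of the
sphere whose forward orbit stays in `closedBall σ δ` until it reaches the point near `σ`. As `σ` is
fixed, the backward flow keeps points near `σ` inside `ball σ δ` for any bounded time, so the closer
that endpoint is to `σ`, the longer the stay. A limit of these sphere points lies in `ω(x)`, differs
from `σ`, and its whole forward orbit stays in `closedBall σ δ ⊆ ball σ ε`.
-/

open Filter Topology Set Metric

lemma Continuous.exists_last_crossing {g : ℝ → ℝ} (hg : Continuous g) {a b δ : ℝ} (hba : b ≤ a)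
    (hb : δ ≤ g b) (ha : g a < δ) : ∃ u ∈ Ico b a, g u = δ ∧ ∀ s ∈ Icc u a, g s ≤ δ := by
  have hS : IsCompact (Icc b a ∩ {t | δ ≤ g t}) :=
    isCompact_Icc.inter_right (isClosed_le continuous_const hg)
  obtain ⟨u, ⟨⟨hbu, hua⟩, hδu⟩, hmax⟩ := hS.exists_isGreatest ⟨b, ⟨le_rfl, hba⟩, hb⟩
  have hua' : u < a := hua.lt_of_ne (by rintro rfl; exact ha.not_ge hδu)
  have hafter : Ioc u a ⊆ {s | g s ≤ δ} := fun s hs =>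
    show g s ≤ δ from le_of_not_gt fun h => hs.1.not_ge (hmax ⟨⟨hbu.trans hs.1.le, hs.2⟩, h.le⟩)
  have hle : Icc u a ⊆ {s | g s ≤ δ} := by
    rw [← closure_Ioc hua'.ne]
    exact closure_minimal hafter (isClosed_le hg continuous_const)
  exact ⟨u, ⟨hbu, hua'⟩, (hle (left_mem_Icc.2 hua)).antisymm hδu, hle⟩

section Flow

variable {M : Type*} {φ : ℝ → M → M}

lemma eventually_forall_flow_mem_of_fixed [TopologicalSpace M]
    (hcont : Continuous fun p : ℝ × M => φ p.1 p.2) {σ : M} (hσ : ∀ t, φ t σ = σ)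
    {K : Set ℝ} (hK : IsCompact K) {U : Set M} (hU : U ∈ 𝓝 σ) :
    ∀ᶠ z in 𝓝 σ, ∀ s ∈ K, φ s z ∈ U := by
  refine hK.eventually_forall_of_forall_eventually fun s _ => ?_
  have hφ : Tendsto (fun p : M × ℝ => φ p.2 p.1) (𝓝 (σ, s)) (𝓝 (φ s σ)) :=
    (hcont.comp continuous_swap).continuousAt
  rw [hσ] at hφ
  exact hφ hU

lemma flow_mem_of_tendsto_of_forall_Icc_flow_mem [TopologicalSpace M]
    (hcont : Continuous fun p : ℝ × M => φ p.1 p.2) {ι : Type*} {l : Filter ι} [l.NeBot]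
    {y : ι → M} {z : M} (hy : Tendsto y l (𝓝 z)) {T : ι → ℝ} (hT : Tendsto T l atTop)
    {C : Set M} (hC : IsClosed C) (hstay : ∀ i, ∀ t ∈ Icc 0 (T i), φ t (y i) ∈ C)
    {t : ℝ} (ht : 0 ≤ t) : φ t z ∈ C :=
  hC.mem_of_tendsto (((hcont.comp (Continuous.prodMk_right t)).tendsto z).comp hy)
    ((hT.eventually_ge_atTop t).mono fun i hi => hstay i t ⟨ht, hi⟩)

lemma exists_sphere_mem_forall_Icc_flow_mem_closedBall [MetricSpace M]
    (hcont : Continuous fun p : ℝ × M => φ p.1 p.2) (hadd : ∀ t s x, φ (t + s) x = φ t (φ s x))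
    {σ : M} (hσ : ∀ t, φ t σ = σ) {x : M} {δ : ℝ} (hδ : 0 < δ)
    (hfar : ∃ᶠ t in atTop, δ ≤ dist (φ t x) σ) (hnear : MapClusterPt σ atTop (φ · x))
    (T b : ℝ) : ∃ u ≥ b, φ u x ∈ sphere σ δ ∧ ∀ t ∈ Icc 0 T, φ t (φ u x) ∈ closedBall σ δ := by
  obtain ⟨b', hb', hbb'⟩ := (hfar.and_eventually (eventually_ge_atTop b)).exists
  have hback : ∀ᶠ z in 𝓝 σ, ∀ s ∈ Icc (-T) 0, φ s z ∈ ball σ δ :=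
    eventually_forall_flow_mem_of_fixed hcont hσ isCompact_Icc (ball_mem_nhds σ hδ)
  obtain ⟨a, ⟨hback_a, ha⟩, hb'a⟩ :=
    ((hnear.frequently (hback.and (ball_mem_nhds σ hδ))).and_eventually
      (eventually_ge_atTop b')).exists
  have hg : Continuous fun t => dist (φ t x) σ :=
    (hcont.comp (continuous_id.prodMk continuous_const)).dist continuous_const
  obtain ⟨u, ⟨hb'u, hua⟩, hu, hstay⟩ := hg.exists_last_crossing hb'a hb' ha
  -- Otherwise `φ u x ∈ sphere σ δ` would be the image of `φ a x` under a short backward flow.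
  have hTu : T ≤ a - u := by
    by_contra! h
    have hback_u := hback_a (u - a) ⟨by linarith, by linarith⟩
    rw [← hadd, sub_add_cancel] at hback_u
    exact (mem_ball.1 hback_u).ne hu
  refine ⟨u, hbb'.trans hb'u, hu, fun t ht => ?_⟩
  rw [mem_closedBall, ← hadd]
  exact hstay _ ⟨by linarith [ht.1], by linarith [ht.2]⟩

end Flow

theorem stmt_5_general {M : Type*} [MetricSpace M] [CompactSpace M]
    (φ : ℝ → M → M)
    (hcont : Continuous fun p : ℝ × M => φ p.1 p.2)
    (hadd : ∀ t s x, φ (t + s) x = φ t (φ s x))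
    (x σ : M) (hσ : ∀ t : ℝ, φ t σ = σ)
    (ω : M → Set M)
    (hω : ∀ p, ω p = {z | ∃ t : ℕ → ℝ, Tendsto t atTop atTop ∧
        Tendsto (fun n => φ (t n) p) atTop (𝓝 z)})
    (hσω : σ ∈ ω x) (hnt : ω x ≠ {σ})
    (ε : ℝ) (hε : 0 < ε)
    (hloc : ∀ z : M, (∀ t : ℝ, 0 ≤ t → φ t z ∈ Metric.ball σ ε) →
        Tendsto (fun t : ℝ => φ t z) atTop (𝓝 σ)) :
    ∃ y : M, y ≠ σ ∧ y ∈ ω x ∧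
      (∀ t : ℝ, 0 ≤ t → φ t y ∈ closure (Metric.ball σ ε)) ∧
      Tendsto (fun t : ℝ => φ t y) atTop (𝓝 σ) := by
  obtain ⟨w, hw, hwσ⟩ : ∃ w ∈ ω x, w ≠ σ := by
    by_contra! h
    exact hnt (eq_singleton_iff_unique_mem.2 ⟨hσω, h⟩)
  have hclust : ∀ z ∈ ω x, MapClusterPt z atTop (φ · x) := by
    intro z hz
    rw [hω] at hz
    obtain ⟨t, ht, hz⟩ := hz
    exact hz.mapClusterPt.of_comp ht
  set δ := min (ε / 2) (dist w σ / 2)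
  have hδ : 0 < δ := lt_min (half_pos hε) (half_pos (dist_pos.2 hwσ))
  have hδw : δ < dist w σ := (min_le_right _ _).trans_lt (half_lt_self (dist_pos.2 hwσ))
  have hfar : ∃ᶠ t in atTop, δ ≤ dist (φ t x) σ :=
    ((hclust w hw).frequently ((isOpen_lt continuous_const
      (continuous_id.dist continuous_const)).mem_nhds hδw)).mono fun _ h => h.le
  choose u hu_ge hu_sphere hu_stay using fun n : ℕ =>
    exists_sphere_mem_forall_Icc_flow_mem_closedBall hcont hadd hσ hδ hfar (hclust σ hσω) n n
  obtain ⟨y, -, ρ, hρ, hy⟩ := isCompact_univ.tendsto_subseq fun n => mem_univ (φ (u n) x)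
  have hρ_top : Tendsto (fun k => (ρ k : ℝ)) atTop atTop :=
    tendsto_natCast_atTop_atTop.comp hρ.tendsto_atTop
  have hball : ∀ t, 0 ≤ t → φ t y ∈ ball σ ε := fun t ht =>
    closedBall_subset_ball ((min_le_left _ _).trans_lt (half_lt_self hε))
      (flow_mem_of_tendsto_of_forall_Icc_flow_mem hcont hy hρ_top isClosed_closedBall
        (fun k => hu_stay (ρ k)) ht)
  refine ⟨y, ?_, ?_, fun t ht => subset_closure (hball t ht), hloc y hball⟩
  · exact ne_of_mem_sphere (isClosed_sphere.mem_of_tendsto hy (.of_forall fun k => hu_sphere _))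
      hδ.ne'
  · rw [hω]
    exact ⟨_, tendsto_atTop_mono (fun k => hu_ge _) hρ_top, hy⟩

theorem stmt_5 {M : Type*} [MetricSpace M] [CompactSpace M]
    (φ : ℝ → M → M)
    (hcont : Continuous fun p : ℝ × M => φ p.1 p.2)
    (h0 : ∀ x, φ 0 x = x)
    (hadd : ∀ t s x, φ (t + s) x = φ t (φ s x))
    (x σ : M) (hσ : ∀ t : ℝ, φ t σ = σ)
    (ω : M → Set M)
    (hω : ∀ p, ω p = {z | ∃ t : ℕ → ℝ, Tendsto t atTop atTop ∧
        Tendsto (fun n => φ (t n) p) atTop (𝓝 z)})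
    (hσω : σ ∈ ω x) (hnt : ω x ≠ {σ})
    (ε : ℝ) (hε : 0 < ε)
    (hloc : ∀ z : M, (∀ t : ℝ, 0 ≤ t → φ t z ∈ Metric.ball σ ε) →
        Tendsto (fun t : ℝ => φ t z) atTop (𝓝 σ)) :
    ∃ y : M, y ≠ σ ∧ y ∈ ω x ∧
      (∀ t : ℝ, 0 ≤ t → φ t y ∈ closure (Metric.ball σ ε)) ∧
      Tendsto (fun t : ℝ => φ t y) atTop (𝓝 σ) :=
  stmt_5_general φ hcont hadd x σ hσ ω hω hσω hnt ε hε hloc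
end

section
/- Let f : M → ℝ be a continuous function on a compact metric space M with a continuous map T : M → M. If there exists a point x ∈ M and a sequence n_k → ∞ such that (1/n_k) Σ_{j=0}^{n_k−1} f(T^j x) ≥ 0 for all k, then there exists a T-invariant Borel probability measure μ on M with ∫ f dμ ≥ 0; moreover μ can be taken ergodic. -/
/-!
Averaging the point masses along the orbit of `x` gives positive normalized functionals on
`C(M, ℝ)` that are invariant up to `O(1 / n_k)` and are nonnegative on `f`; a weak-* limit point
is an invariant state `φ₀` with `φ₀ f ≥ 0` (Krylov–Bogolyubov). The invariant states form a
weak-* compact convex set, so the face on which `φ ↦ φ f` is maximal has an extreme point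
(Krein–Milman), and this point is extreme in the whole set. By the Riesz–Markov–Kakutani theorem
it is integration against an invariant probability measure `μ`, which is extreme among invariant
probability measures and hence ergodic, and `∫ f dμ ≥ φ₀ f ≥ 0`.
-/

open Filter Topology MeasureTheory Set
open scoped ENNReal CompactlySupported

-- Mathlib provides this for `WeakBilin` only; instance search does not see through `WeakDual`.
instance WeakDual.instLocallyConvexSpace (E : Type*) [AddCommGroup E] [TopologicalSpace E]
    [Module ℝ E] : LocallyConvexSpace ℝ (WeakDual ℝ E) :=
  inferInstanceAs (LocallyConvexSpace ℝ (WeakBilin (topDualPairing ℝ E)))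

noncomputable def WeakDual.evalCLM {𝕜 E : Type*} [CommSemiring 𝕜] [TopologicalSpace 𝕜]
    [ContinuousAdd 𝕜] [ContinuousConstSMul 𝕜 𝕜] [AddCommMonoid E] [Module 𝕜 E]
    [TopologicalSpace E] (y : E) : WeakDual 𝕜 E →L[𝕜] 𝕜 where
  toFun φ := φ y
  map_add' _ _ := rfl
  map_smul' _ _ := rfl
  cont := WeakDual.eval_continuous y

theorem IsCompact.exists_mem_extremePoints_isMaxOn {E : Type*} [AddCommGroup E] [Module ℝ E]
    [TopologicalSpace E] [T2Space E] [IsTopologicalAddGroup E] [ContinuousSMul ℝ E]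
    [LocallyConvexSpace ℝ E] {s : Set E} (hs : IsCompact s) (hne : s.Nonempty)
    (l : StrongDual ℝ E) : ∃ x ∈ extremePoints ℝ s, IsMaxOn l s x := by
  have hface : IsExposed ℝ s {x ∈ s | ∀ y ∈ s, l y ≤ l x} := fun _ => ⟨l, rfl⟩
  obtain ⟨z, hzs, hz⟩ := hs.exists_isMaxOn hne l.continuous.continuousOn
  obtain ⟨x, hx⟩ := (hface.isCompact hs).extremePoints_nonempty ⟨z, hzs, hz⟩
  exact ⟨x, hface.isExtreme.extremePoints_subset_extremePoints hx, hx.1.2⟩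

theorem ContinuousMap.integrable_of_compactSpace {X : Type*} [TopologicalSpace X]
    [CompactSpace X] [MeasurableSpace X] [OpensMeasurableSpace X] (g : C(X, ℝ))
    (μ : Measure X) [IsFiniteMeasure μ] : Integrable g μ :=
  g.continuous.integrable_of_hasCompactSupport (.of_compactSpace g)

section States

variable {X : Type*} [TopologicalSpace X]

def stateSpace (X : Type*) [TopologicalSpace X] : Set (WeakDual ℝ C(X, ℝ)) :=
  {φ | (∀ g, 0 ≤ g → 0 ≤ φ g) ∧ φ 1 = 1}

def invariantStates (T : C(X, X)) : Set (WeakDual ℝ C(X, ℝ)) :=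
  {φ ∈ stateSpace X | ∀ g, φ (g.comp T) = φ g}

theorem abs_apply_le_norm_of_mem_stateSpace [CompactSpace X] {φ : WeakDual ℝ C(X, ℝ)}
    (hφ : φ ∈ stateSpace X) (g : C(X, ℝ)) : |φ g| ≤ ‖g‖ := by
  have hg : ∀ y, |g y| ≤ ‖g‖ := g.norm_coe_le_norm
  have hupper := hφ.1 (‖g‖ • 1 - g) fun y => by simp [(abs_le.1 (hg y)).2]
  have hlower := hφ.1 (‖g‖ • 1 + g) fun y => by simp; linarith [(abs_le.1 (hg y)).1]
  simp only [map_sub, map_add, map_smul, hφ.2, smul_eq_mul, mul_one, sub_nonneg] at hupper hlower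
  exact abs_le.2 ⟨by linarith, hupper⟩

theorem isClosed_stateSpace : IsClosed (stateSpace X) := by
  simp only [stateSpace, ofPred_and, ofPred_forall]
  exact (isClosed_iInter fun g => isClosed_iInter fun _ =>
    isClosed_le continuous_const (WeakDual.eval_continuous g)).inter
    (isClosed_eq (WeakDual.eval_continuous 1) continuous_const)

theorem isCompact_stateSpace [CompactSpace X] : IsCompact (stateSpace X) := by
  refine WeakDual.isCompact_of_bounded_of_closed ?_ isClosed_stateSpace
  refine isBounded_iff_forall_norm_le.2 ⟨1, fun φ hφ => ?_⟩
  refine ContinuousLinearMap.opNorm_le_bound _ zero_le_one fun g => ?_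
  rw [one_mul, Real.norm_eq_abs]
  exact abs_apply_le_norm_of_mem_stateSpace hφ g

theorem isCompact_invariantStates [CompactSpace X] (T : C(X, X)) :
    IsCompact (invariantStates T) :=
  show IsCompact (stateSpace X ∩ {φ | ∀ g : C(X, ℝ), φ (g.comp T) = φ g}) from
  isCompact_stateSpace.inter_right <| by
    simpa only [ofPred_forall] using isClosed_iInter fun g : C(X, ℝ) =>
      isClosed_eq (WeakDual.eval_continuous (g.comp T)) (WeakDual.eval_continuous g)

end States

section KrylovBogolyubov

variable {X : Type*} [TopologicalSpace X]

noncomputable def empiricalState (T : C(X, X)) (x : X) (N : ℕ) : WeakDual ℝ C(X, ℝ) :=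
  StrongDual.toWeakDual <| (N : ℝ)⁻¹ • ∑ j ∈ Finset.range N, ContinuousMap.evalCLM ℝ (T^[j] x)

theorem empiricalState_apply (T : C(X, X)) (x : X) (N : ℕ) (g : C(X, ℝ)) :
    empiricalState T x N g = (N : ℝ)⁻¹ * ∑ j ∈ Finset.range N, g (T^[j] x) := by
  rw [empiricalState, StrongDual.toWeakDual_apply]
  simp

theorem empiricalState_mem_stateSpace (T : C(X, X)) (x : X) {N : ℕ} (hN : N ≠ 0) :
    empiricalState T x N ∈ stateSpace X := by
  refine ⟨fun g hg => ?_, ?_⟩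
  · rw [empiricalState_apply]
    exact mul_nonneg (by positivity) (Finset.sum_nonneg fun j _ => hg _)
  · simp [empiricalState_apply, hN]

theorem abs_empiricalState_comp_sub_le [CompactSpace X] (T : C(X, X)) (x : X) (N : ℕ)
    (g : C(X, ℝ)) :
    |empiricalState T x N (g.comp T) - empiricalState T x N g| ≤ 2 * ‖g‖ / N := by
  have htelescope : empiricalState T x N (g.comp T) - empiricalState T x N g
      = (N : ℝ)⁻¹ * (g (T^[N] x) - g x) := by
    simp only [empiricalState_apply, ← mul_sub, ← Finset.sum_sub_distrib,
      ContinuousMap.comp_apply, ← Function.iterate_succ_apply' T]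
    rw [Finset.sum_range_sub (fun j => g (T^[j] x)), Function.iterate_zero_apply]
  have hg : ∀ y, |g y| ≤ ‖g‖ := g.norm_coe_le_norm
  rw [htelescope, abs_mul, abs_inv, Nat.abs_cast, inv_mul_eq_div]
  gcongr
  exact (abs_sub _ _).trans (by linarith [hg (T^[N] x), hg x])

theorem tendsto_empiricalState_comp_sub [CompactSpace X] (T : C(X, X)) (x : X) {n : ℕ → ℕ}
    (hn : Tendsto n atTop atTop) (g : C(X, ℝ)) :
    Tendsto (fun k => empiricalState T x (n k) (g.comp T) - empiricalState T x (n k) g)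
      atTop (𝓝 0) := by
  refine squeeze_zero_norm (fun k => abs_empiricalState_comp_sub_le T x (n k) g) ?_
  simpa using (tendsto_natCast_atTop_atTop.comp hn).const_div_atTop (2 * ‖g‖)

theorem exists_mem_invariantStates_apply_nonneg [CompactSpace X] (T : C(X, X)) (x : X)
    {n : ℕ → ℕ} (hn : Tendsto n atTop atTop) {f : C(X, ℝ)}
    (hf : ∀ k, 0 ≤ empiricalState T x (n k) f) : ∃ φ ∈ invariantStates T, 0 ≤ φ f := by
  let e := fun k => empiricalState T x (n k)
  let U : Ultrafilter ℕ := .of atTop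
  have hU : (U : Filter ℕ) ≤ atTop := Ultrafilter.of_le _
  have he : ∀ᶠ k in U, e k ∈ stateSpace X :=
    hU <| (hn.eventually_ne_atTop 0).mono fun k hk => empiricalState_mem_stateSpace T x hk
  obtain ⟨φ, hφ, hlim⟩ :=
    isCompact_stateSpace.ultrafilter_le_nhds (U.map e) (le_principal_iff.2 he)
  have heval (g : C(X, ℝ)) : Tendsto (fun k => e k g) U (𝓝 (φ g)) :=
    ((WeakDual.eval_continuous g).tendsto φ).comp hlim
  refine ⟨φ, ⟨hφ, fun g => ?_⟩, ge_of_tendsto (heval f) (.of_forall hf)⟩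
  exact sub_eq_zero.1 <| tendsto_nhds_unique ((heval _).sub (heval g))
    ((tendsto_empiricalState_comp_sub T x hn g).mono_left hU)

end KrylovBogolyubov

section Measures

variable {X : Type*} [MetricSpace X] [CompactSpace X] [MeasurableSpace X] [BorelSpace X]

noncomputable def integralState (μ : Measure X) [IsProbabilityMeasure μ] :
    WeakDual ℝ C(X, ℝ) :=
  StrongDual.toWeakDual <| LinearMap.mkContinuous
    { toFun g := ∫ x, g x ∂μ
      map_add' g h :=
        integral_add (g.integrable_of_compactSpace μ) (h.integrable_of_compactSpace μ)
      map_smul' c g := integral_smul c g } 1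
    fun g => by
      simpa using norm_integral_le_of_norm_le_const (μ := μ) (.of_forall g.norm_coe_le_norm)

variable {μ : Measure X} [IsProbabilityMeasure μ]

theorem integralState_apply (g : C(X, ℝ)) : integralState μ g = ∫ x, g x ∂μ := rfl

theorem eq_of_integralState_eq {ν : Measure X} [IsProbabilityMeasure ν]
    (h : integralState μ = integralState ν) : μ = ν :=
  ext_of_forall_integral_eq_of_IsFiniteMeasure fun g => congr($h g.toContinuousMap)

theorem integralState_mem_invariantStates_iff (T : C(X, X)) :
    integralState μ ∈ invariantStates T ↔ MeasurePreserving T μ μ := by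
  have hT : Measurable T := T.continuous.measurable
  have hcomp (g : C(X, ℝ)) : ∫ x, g x ∂μ.map T = integralState μ (g.comp T) :=
    integral_map hT.aemeasurable g.continuous.aestronglyMeasurable
  refine ⟨fun h => ⟨hT, ?_⟩, fun h => ⟨⟨fun g hg => integral_nonneg hg, ?_⟩, fun g => ?_⟩⟩
  · exact ext_of_forall_integral_eq_of_IsFiniteMeasure fun g => (hcomp g).trans (h.2 g)
  · simp [integralState_apply]
  · rw [← hcomp, h.map_eq, integralState_apply]

theorem exists_integralState_eq {φ : WeakDual ℝ C(X, ℝ)} (hφ : φ ∈ stateSpace X) :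
    ∃ (μ : Measure X) (_ : IsProbabilityMeasure μ), integralState μ = φ := by
  let Λ : C_c(X, ℝ) →ₚ[ℝ] ℝ :=
    { toFun g := φ g.toContinuousMap
      map_add' g h := map_add φ _ _
      map_smul' c g := map_smul φ c _
      monotone' g h hgh := by
        simpa [sub_nonneg] using hφ.1 (h.toContinuousMap - g.toContinuousMap) (sub_nonneg.2 hgh) }
  have hΛ (g : C(X, ℝ)) : ∫ x, g x ∂(RealRMK.rieszMeasure Λ) = φ g :=
    RealRMK.integral_rieszMeasure Λ (CompactlySupportedContinuousMap.continuousMapEquiv g)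
  have : IsProbabilityMeasure (RealRMK.rieszMeasure Λ) := by
    refine ⟨(ENNReal.toReal_eq_one_iff _).1 ?_⟩
    simpa [hφ.2, measureReal_def] using hΛ 1
  exact ⟨_, this, DFunLike.ext _ _ hΛ⟩

theorem mem_extremePoints_of_integralState_mem_extremePoints (T : C(X, X))
    (h : integralState μ ∈ extremePoints ℝ (invariantStates T)) :
    μ ∈ extremePoints ℝ≥0∞ {ν | MeasurePreserving T ν ν ∧ IsProbabilityMeasure ν} := by
  rw [mem_extremePoints_iff_left] at h ⊢
  refine ⟨⟨(integralState_mem_invariantStates_iff T).1 h.1, ‹_›⟩, ?_⟩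
  rintro ν₁ ⟨hν₁, _⟩ ν₂ ⟨hν₂, _⟩ ⟨a, b, ha, hb, hab, rfl⟩
  have hsegment : integralState (a • ν₁ + b • ν₂) ∈
      openSegment ℝ (integralState ν₁) (integralState ν₂) := by
    have ha_top : a ≠ ∞ := ne_top_of_le_ne_top ENNReal.one_ne_top (hab ▸ le_self_add)
    have hb_top : b ≠ ∞ := ne_top_of_le_ne_top ENNReal.one_ne_top (hab ▸ le_add_self)
    refine ⟨a.toReal, b.toReal, ENNReal.toReal_pos ha.ne' ha_top,
      ENNReal.toReal_pos hb.ne' hb_top,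
      by rw [← ENNReal.toReal_add ha_top hb_top, hab, ENNReal.toReal_one], ?_⟩
    refine DFunLike.ext _ _ fun g => ?_
    change a.toReal * ∫ x, g x ∂ν₁ + b.toReal * ∫ x, g x ∂ν₂ = ∫ x, g x ∂(a • ν₁ + b • ν₂)
    rw [integral_add_measure ((g.integrable_of_compactSpace ν₁).smul_measure ha_top)
      ((g.integrable_of_compactSpace ν₂).smul_measure hb_top), integral_smul_measure,
      integral_smul_measure, smul_eq_mul, smul_eq_mul]
  exact eq_of_integralState_eq <| h.2 _ ((integralState_mem_invariantStates_iff T).2 hν₁) _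
    ((integralState_mem_invariantStates_iff T).2 hν₂) hsegment

end Measures

theorem stmt_10 {M : Type*} [MetricSpace M] [CompactSpace M]
    [MeasurableSpace M] [BorelSpace M]
    (T : M → M) (hT : Continuous T)
    (f : M → ℝ) (hf : Continuous f)
    (x : M) (n : ℕ → ℕ) (hn : Tendsto n atTop atTop)
    (havg : ∀ k : ℕ, 0 ≤ (1 / (n k : ℝ)) *
        ∑ j ∈ Finset.range (n k), f (T^[j] x)) :
    ∃ μ : Measure M, IsProbabilityMeasure μ ∧ Ergodic T μ ∧ 0 ≤ ∫ y, f y ∂μ := by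
  let Tc : C(M, M) := ⟨T, hT⟩
  let fc : C(M, ℝ) := ⟨f, hf⟩
  obtain ⟨φ₀, hφ₀, hφ₀f⟩ := exists_mem_invariantStates_apply_nonneg Tc x hn (f := fc)
    fun k => by rw [empiricalState_apply, ← one_div]; exact havg k
  obtain ⟨φ, hφ, hφmax⟩ := (isCompact_invariantStates Tc).exists_mem_extremePoints_isMaxOn
    ⟨φ₀, hφ₀⟩ (WeakDual.evalCLM fc)
  obtain ⟨μ, _, rfl⟩ := exists_integralState_eq hφ.1.1
  exact ⟨μ, ‹_›, .of_mem_extremePoints (mem_extremePoints_of_integralState_mem_extremePoints Tc hφ),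
    hφ₀f.trans (hφmax hφ₀)⟩
end

section
/- Let E and F be complementary subspaces of a finite-dimensional inner product space V that are orthogonal, and let (A_t)_{t∈ℝ} be a one-parameter group of linear automorphisms of V preserving both E and F. Suppose there are C > 1, λ > 0 such that ‖A_{−t} u‖ / ‖A_{−t} v‖ ≤ C e^{−λ t} for all t > 0 and all unit vectors u ∈ F, v ∈ E. Let L ⊆ F be any line and let π_L : V → L^⊥ be the orthogonal projection; define the induced maps P_t = π_{A_t L} ∘ A_t on L^⊥. Then E ⊆ L^⊥, E is P_t-invariant with P_t|_E = A_t|_E, and the splitting L^⊥ = E ⊕ (F ∩ L^⊥) is dominated for (P_t): ‖P_{−t} u'‖/‖P_{−t} v'‖ ≤ C e^{−λ t} for all unit u' ∈ F ∩ L^⊥, v' ∈ E, t > 0. -/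
open Real RealInnerProductSpace

/-! Since `L ⊆ F ⟂ E` and `A_t` preserves `E` and `F`, the line `A_t L` stays orthogonal to `E`,
so the projection onto `(A_t L)ᗮ` fixes `A_t E = E`: there `P_t = A_t`. On `F ∩ Lᗮ` the
projection can only shrink norms, so the ratio `‖P_{-t} u‖ / ‖P_{-t} v‖` is bounded by the
ratio for `A_{-t}`. -/

namespace Submodule

variable {𝕜 V : Type*} [RCLike 𝕜] [NormedAddCommGroup V] [InnerProductSpace 𝕜 V]

theorem orthogonalProjectionOnto_orthogonal_apply_of_isOrtho {E K : Submodule 𝕜 V}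
    [K.HasOrthogonalProjection] (h : E ⟂ K) {v : V} (hv : v ∈ E) :
    (Kᗮ.orthogonalProjectionOnto v : V) = v :=
  congrArg Subtype.val (orthogonalProjectionOnto_mem_subspace_eq_self (⟨v, h.le hv⟩ : Kᗮ))

theorem orthogonalProjectionOnto_orthogonal_map_apply_of_mem {E F L : Submodule 𝕜 V}
    (hEF : E ⟂ F) (f : V →ₗ[𝕜] V) [(L.map f).HasOrthogonalProjection]
    (hE : E.map f ≤ E) (hF : F.map f ≤ F) (hLF : L ≤ F) {v : V} (hv : v ∈ E) :
    ((L.map f)ᗮ.orthogonalProjectionOnto (f v) : V) = f v :=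
  orthogonalProjectionOnto_orthogonal_apply_of_isOrtho
    (hEF.mono_right ((map_mono hLF).trans hF)) (hE (mem_map_of_mem hv))

end Submodule

open Submodule

theorem stmt_13_general {V : Type*} [NormedAddCommGroup V] [InnerProductSpace ℝ V]
    [FiniteDimensional ℝ V]
    (E F : Submodule ℝ V)
    (horth : ∀ u ∈ E, ∀ v ∈ F, (inner ℝ u v : ℝ) = 0)
    (A : ℝ → V ≃ₗ[ℝ] V)
    (hAE : ∀ t, E.map (A t : V →ₗ[ℝ] V) = E)
    (hAF : ∀ t, F.map (A t : V →ₗ[ℝ] V) = F)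
    (C lam : ℝ)
    (hdom : ∀ t : ℝ, 0 < t → ∀ u ∈ F, ∀ v ∈ E, ‖u‖ = 1 → ‖v‖ = 1 →
        ‖A (-t) u‖ / ‖A (-t) v‖ ≤ C * Real.exp (-lam * t))
    (L : Submodule ℝ V) (hLF : L ≤ F)
    (P : ℝ → V → V)
    (hP : ∀ t v, P t v =
        (Submodule.orthogonalProjectionOnto ((L.map ((A t : V →ₗ[ℝ] V)))ᗮ) (A t v) : V)) :
    E ≤ Lᗮ ∧
    (∀ t : ℝ, ∀ v ∈ E, P t v = A t v ∧ P t v ∈ E) ∧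
    (∀ t : ℝ, 0 < t → ∀ u' ∈ F ⊓ Lᗮ, ∀ v' ∈ E, ‖u'‖ = 1 → ‖v'‖ = 1 →
        ‖P (-t) u'‖ / ‖P (-t) v'‖ ≤ C * Real.exp (-lam * t)) := by
  have hEF : E ⟂ F := isOrtho_iff_inner_eq.mpr horth
  have hPE : ∀ t, ∀ v ∈ E, P t v = A t v := fun t v hv => by
    rw [hP]
    exact orthogonalProjectionOnto_orthogonal_map_apply_of_mem hEF _ (hAE t).le (hAF t).le hLF hv
  refine ⟨(hEF.mono_right hLF).le, fun t v hv => ⟨hPE t v hv, ?_⟩, ?_⟩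
  · rw [hPE t v hv, ← hAE t]
    exact mem_map_of_mem hv
  · intro t ht u' hu' v' hv' hu'1 hv'1
    calc ‖P (-t) u'‖ / ‖P (-t) v'‖ ≤ ‖A (-t) u'‖ / ‖A (-t) v'‖ := by
          rw [hPE _ _ hv', hP]
          gcongr
          exact norm_orthogonalProjectionOnto_apply_le _ _
      _ ≤ C * Real.exp (-lam * t) := hdom t ht u' hu'.1 v' hv' hu'1 hv'1

theorem stmt_13 {V : Type*} [NormedAddCommGroup V] [InnerProductSpace ℝ V]
    [FiniteDimensional ℝ V]
    (E F : Submodule ℝ V) (hcompl : IsCompl E F)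
    (horth : ∀ u ∈ E, ∀ v ∈ F, (inner ℝ u v : ℝ) = 0)
    (A : ℝ → V ≃ₗ[ℝ] V)
    (h0 : ∀ v, A 0 v = v)
    (hadd : ∀ t s v, A (t + s) v = A t (A s v))
    (hAE : ∀ t, E.map (A t : V →ₗ[ℝ] V) = E)
    (hAF : ∀ t, F.map (A t : V →ₗ[ℝ] V) = F)
    (C lam : ℝ) (hC : 1 < C) (hlam : 0 < lam)
    (hdom : ∀ t : ℝ, 0 < t → ∀ u ∈ F, ∀ v ∈ E, ‖u‖ = 1 → ‖v‖ = 1 →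
        ‖A (-t) u‖ / ‖A (-t) v‖ ≤ C * Real.exp (-lam * t))
    (L : Submodule ℝ V) (hL : Module.finrank ℝ L = 1) (hLF : L ≤ F)
    (P : ℝ → V → V)
    (hP : ∀ t v, P t v =
        (Submodule.orthogonalProjectionOnto ((L.map ((A t : V →ₗ[ℝ] V)))ᗮ) (A t v) : V)) :
    E ≤ Lᗮ ∧
    (∀ t : ℝ, ∀ v ∈ E, P t v = A t v ∧ P t v ∈ E) ∧
    (∀ t : ℝ, 0 < t → ∀ u' ∈ F ⊓ Lᗮ, ∀ v' ∈ E, ‖u'‖ = 1 → ‖v'‖ = 1 →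
        ‖P (-t) u'‖ / ‖P (-t) v'‖ ≤ C * Real.exp (-lam * t)) :=
  stmt_13_general E F horth A hAE hAF C lam hdom L hLF P hP
end
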